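/- For any C¹ function u on ℝ^m × ℝ^k and (z,σ) ≠ 0, the pointwise inequality |∇_α u|² ≥ (Z_α u / ρ_α)² ψ_α holds, where ψ_α = |z|^{2α}/ρ_α^{2α}. -/

import Mathlib

open MeasureTheory Real

noncomputable section

/-- The product space `ℝ^m × ℝ^k`. -/
abbrev E (m k : ℕ) := EuclideanSpace ℝ (Fin m) × EuclideanSpace ℝ (Fin k)

/-- The Baouendi–Grushin pseudo-gauge `ρ_α`. -/
def rho (m k : ℕ) (α : ℝ) (x : E m k) : ℝ :=
  (‖x.1‖ ^ (2 * (α + 1)) + 4 * (α + 1) ^ 2 * ‖x.2‖ ^ 2) ^ (1 / (2 * (α + 1)))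

/-- The anisotropic dilations `δ_λ(z,σ) = (λ z, λ^{α+1} σ)`. -/
def dil (m k : ℕ) (α lam : ℝ) (x : E m k) : E m k :=
  (lam • x.1, (lam ^ (α + 1)) • x.2)

/-- Standard basis vector in the `z`-slot. -/
def ez (m k : ℕ) (i : Fin m) : E m k := (EuclideanSpace.single i 1, 0)

/-- Standard basis vector in the `σ`-slot. -/
def es (m k : ℕ) (j : Fin k) : E m k := (0, EuclideanSpace.single j 1)

/-- The generator `Z_α u = ⟨z, ∇_z u⟩ + (α+1)⟨σ, ∇_σ u⟩`. -/
def Zop (m k : ℕ) (α : ℝ) (u : E m k → ℝ) (x : E m k) : ℝ :=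
  fderiv ℝ u x (x.1, (α + 1) • x.2)

/-- `ψ_α = |z|^{2α} / ρ_α^{2α}`. -/
def psi (m k : ℕ) (α : ℝ) (x : E m k) : ℝ :=
  ‖x.1‖ ^ (2 * α) / rho m k α x ^ (2 * α)

/-- `|∇_z u|²`. -/
def zGradSq (m k : ℕ) (u : E m k → ℝ) (x : E m k) : ℝ :=
  ∑ i : Fin m, (fderiv ℝ u x (ez m k i)) ^ 2

/-- `|∇_σ u|²`. -/
def sGradSq (m k : ℕ) (u : E m k → ℝ) (x : E m k) : ℝ :=
  ∑ j : Fin k, (fderiv ℝ u x (es m k j)) ^ 2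

/-- `|∇_α u|² = |∇_z u|² + (|z|^{2α}/4)|∇_σ u|²`. -/
def alphaGradSq (m k : ℕ) (α : ℝ) (u : E m k → ℝ) (x : E m k) : ℝ :=
  zGradSq m k u x + ‖x.1‖ ^ (2 * α) / 4 * sGradSq m k u x

/-- `⟨∇_α u, ∇_α v⟩ = ⟨∇_z u, ∇_z v⟩ + (|z|^{2α}/4)⟨∇_σ u, ∇_σ v⟩`. -/
def alphaInner (m k : ℕ) (α : ℝ) (u v : E m k → ℝ) (x : E m k) : ℝ :=
  (∑ i : Fin m, fderiv ℝ u x (ez m k i) * fderiv ℝ v x (ez m k i)) +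
    ‖x.1‖ ^ (2 * α) / 4 *
      ∑ j : Fin k, fderiv ℝ u x (es m k j) * fderiv ℝ v x (es m k j)

/-- The Laplacian in the `z`-variables, `Δ_z u`. -/
def lapZ (m k : ℕ) (u : E m k → ℝ) (x : E m k) : ℝ :=
  ∑ i : Fin m, fderiv ℝ (fun y => fderiv ℝ u y (ez m k i)) x (ez m k i)

/-- The Laplacian in the `σ`-variables, `Δ_σ u`. -/
def lapS (m k : ℕ) (u : E m k → ℝ) (x : E m k) : ℝ :=
  ∑ j : Fin k, fderiv ℝ (fun y => fderiv ℝ u y (es m k j)) x (es m k j)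

/-- The Baouendi–Grushin operator `B_α u = Δ_z u + (|z|^{2α}/4) Δ_σ u`. -/
def Bop (m k : ℕ) (α : ℝ) (u : E m k → ℝ) (x : E m k) : ℝ :=
  lapZ m k u x + ‖x.1‖ ^ (2 * α) / 4 * lapS m k u x

/-- The divergence of a vector field on `ℝ^m × ℝ^k`. -/
def divg (m k : ℕ) (V : E m k → E m k) (x : E m k) : ℝ :=
  (∑ i : Fin m, fderiv ℝ (fun y => (V y).1 i) x (ez m k i)) +
    ∑ j : Fin k, fderiv ℝ (fun y => (V y).2 j) x (es m k j)

end

/-! With `w = |z|^{2α}`, Cauchy–Schwarz for the pairs `(√w z, 2(α+1) σ)` and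
`(∇_z u, √w ∇_σ u / 2)` gives `w (Z_α u)² ≤ (|z|^{2(α+1)} + 4(α+1)²|σ|²) |∇_α u|²`, and the
first factor is `ρ_α^{2(α+1)}`. Dividing by it is the claim, since
`(Z_α u / ρ_α)² ψ_α = w (Z_α u)² / ρ_α^{2(α+1)}`. -/

theorem EuclideanSpace.sum_smul_single {n : Type*} [Fintype n] [DecidableEq n]
    (v : EuclideanSpace ℝ n) : ∑ i, v i • EuclideanSpace.single i (1 : ℝ) = v := by
  simpa using (EuclideanSpace.basisFun n ℝ).sum_repr v

theorem apply_eq_sum_ez_add_sum_es {m k : ℕ} (L : E m k →L[ℝ] ℝ) (v : E m k) :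
    L v = ∑ i, v.1 i * L (ez m k i) + ∑ j, v.2 j * L (es m k j) := by
  have hv : v = ∑ i, v.1 i • ez m k i + ∑ j, v.2 j • es m k j := by
    ext : 1 <;>
      simp [ez, es, Prod.fst_sum, Prod.snd_sum, EuclideanSpace.sum_smul_single]
  conv_lhs => rw [hv]
  simp [map_sum]

theorem Zop_eq_sum {m k : ℕ} (α : ℝ) (u : E m k → ℝ) (x : E m k) :
    Zop m k α u x = ∑ i, x.1 i * fderiv ℝ u x (ez m k i) +
      (α + 1) * ∑ j, x.2 j * fderiv ℝ u x (es m k j) := by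
  rw [Zop, apply_eq_sum_ez_add_sum_es, Finset.mul_sum]
  simp only [smul_eq_mul, WithLp.ofLp_smul, Pi.smul_apply, mul_assoc]

theorem sq_sum_mul_add_mul_sum_mul_mul_le {ι κ : Type*} [Fintype ι] [Fintype κ]
    (x a : ι → ℝ) (y b : κ → ℝ) (c w : ℝ) (hw : 0 ≤ w) :
    (∑ i, x i * a i + c * ∑ j, y j * b j) ^ 2 * w ≤
      (w * ∑ i, x i ^ 2 + 4 * c ^ 2 * ∑ j, y j ^ 2) * (∑ i, a i ^ 2 + w / 4 * ∑ j, b j ^ 2) := by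
  set s := √w
  have hs : s ^ 2 = w := Real.sq_sqrt hw
  have h := Finset.sum_mul_sq_le_sq_mul_sq Finset.univ
    (Sum.elim (fun i => s * x i) fun j => 2 * c * y j) (Sum.elim a fun j => s / 2 * b j)
  simp only [Fintype.sum_sum_type, Sum.elim_inl, Sum.elim_inr, mul_pow] at h
  have hsum : ∑ i, s * x i * a i + ∑ j, 2 * c * y j * (s / 2 * b j) =
      s * (∑ i, x i * a i + c * ∑ j, y j * b j) := by
    simp only [mul_add, Finset.mul_sum]
    congr 1 <;> exact Finset.sum_congr rfl fun _ _ => by ring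
  calc _ = (∑ i, s * x i * a i + ∑ j, 2 * c * y j * (s / 2 * b j)) ^ 2 := by
        rw [hsum, mul_pow, hs, mul_comm]
    _ ≤ _ := h
    _ = _ := by simp only [← Finset.mul_sum, div_pow, hs]; ring

theorem rho_rpow_two_mul_add_one {m k : ℕ} {α : ℝ} (hα : α + 1 ≠ 0) (x : E m k) :
    rho m k α x ^ (2 * (α + 1)) = ‖x.1‖ ^ (2 * (α + 1)) + 4 * (α + 1) ^ 2 * ‖x.2‖ ^ 2 := by
  rw [rho, ← Real.rpow_mul (by positivity), one_div_mul_cancel (mul_ne_zero two_ne_zero hα),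
    Real.rpow_one]

theorem alphaGradSq_ge_general (m k : ℕ) (α : ℝ) (hα : 0 < α) (u : E m k → ℝ) (x : E m k) :
    (Zop m k α u x / rho m k α x) ^ 2 * psi m k α x ≤ alphaGradSq m k α u x := by
  have hα1 : α + 1 ≠ 0 := by positivity
  have hρ : 0 ≤ rho m k α x := by unfold rho; positivity
  have hlhs : (Zop m k α u x / rho m k α x) ^ 2 * psi m k α x =
      Zop m k α u x ^ 2 * ‖x.1‖ ^ (2 * α) / rho m k α x ^ (2 * (α + 1)) := by
    rw [psi, show 2 * (α + 1) = 2 + 2 * α by ring, Real.rpow_add' hρ (by positivity),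
      Real.rpow_two]
    ring
  have hnorm_rpow : ‖x.1‖ ^ (2 * α) * ‖x.1‖ ^ 2 = ‖x.1‖ ^ (2 * (α + 1)) := by
    rw [← Real.rpow_two, ← Real.rpow_add' (norm_nonneg _) (by positivity)]
    ring_nf
  have hCS := sq_sum_mul_add_mul_sum_mul_mul_le (x.1 ·) (fun i => fderiv ℝ u x (ez m k i))
    (x.2 ·) (fun j => fderiv ℝ u x (es m k j)) (α + 1) (‖x.1‖ ^ (2 * α)) (by positivity)
  rw [← Zop_eq_sum, ← EuclideanSpace.real_norm_sq_eq, ← EuclideanSpace.real_norm_sq_eq,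
    hnorm_rpow, ← rho_rpow_two_mul_add_one hα1] at hCS
  rw [hlhs]
  exact div_le_of_le_mul₀ (by positivity)
    (by unfold alphaGradSq zGradSq sGradSq; positivity) (hCS.trans_eq (mul_comm _ _))

theorem alphaGradSq_ge (m k : ℕ) (hm : 1 ≤ m) (hk : 1 ≤ k) (α : ℝ) (hα : 0 < α)
    (u : E m k → ℝ) (hu : ContDiff ℝ 1 u) (x : E m k) (hx : x ≠ 0) :
    (Zop m k α u x / rho m k α x) ^ 2 * psi m k α x ≤ alphaGradSq m k α u x :=
  alphaGradSq_ge_general m k α hα u x
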